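/- arXiv:1312.7548 — 2 statements merged into one kernel-verified Lean document; each statement's English description precedes it below -/
import Mathlib

section
/- For every positive integer n, the number (10n+1)(10n+7)·C(3n,n) divides 88179·C(15n,5n)·C(5n−1,n−1); equivalently, 88179·t_n ≡ 0 (mod 10n+7), where t_n = C(15n,5n)·C(5n−1,n−1)/((10n+1)·C(3n,n)). -/
/-!
By Legendre–Kummer, the exponent of a prime `p` in each side is a sum over the levels `q = p ^ i`
of carry indicators (one per binomial coefficient) and divisibility indicators `[q ∣ x]` (one per
other factor), so it suffices to compare the two sides level by level. For `p ≠ 5` the comparison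
holds at every single level `q`: it depends only on `n mod q`, and for `q > 19` it is a case
analysis on the position of `n mod q` among the twentieths of `q`, while for `q ≤ 19` it is a
finite check, where the factor `88179 = 3 · 7 · 13 · 17 · 19` absorbs the five exceptional levels.
For `p = 5` the factors `10n + 1`, `10n + 7` are prime to `5`, and `C(15n, 5n)` has the same
`5`-adic valuation as `C(3n, n)`.
-/

open Finset

theorem Nat.factorization_eq_sum_ite_dvd {p x b : ℕ} (hp : p.Prime) (hx : 0 < x)
    (hxb : x < p ^ b) : x.factorization p = ∑ i ∈ Ico 1 b, if p ^ i ∣ x then 1 else 0 := by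
  rw [Nat.factorization_eq_card_pow_dvd_of_lt hp hx hxb, card_filter]

theorem Nat.factorization_choose_eq_sum_ite {p n k b : ℕ} (hp : p.Prime) (hb : n + k < p ^ b) :
    ((n + k).choose k).factorization p =
      ∑ i ∈ Ico 1 b, if p ^ i ≤ k % p ^ i + n % p ^ i then 1 else 0 := by
  obtain rfl | hb0 := b.eq_zero_or_pos
  · simp_all
  rw [Nat.factorization_choose' hp (Nat.log_lt_of_lt_pow' hb0.ne' hb), card_filter]

theorem Nat.factorization_choose_mul_of_prime {p n k : ℕ} (hp : p.Prime) (hkn : k ≤ n) :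
    ((p * n).choose (p * k)).factorization p = (n.choose k).factorization p := by
  have hfac : ∀ {m l : ℕ}, l ≤ m → (m.choose l).factorization p + l.factorial.factorization p +
      (m - l).factorial.factorization p = m.factorial.factorization p := fun {m l} h => by
    rw [← Nat.choose_mul_factorial_mul_factorial h, Nat.factorization_mul, Nat.factorization_mul]
    all_goals simp [(Nat.choose_pos h).ne', Nat.factorial_ne_zero]
  have h := hfac (Nat.mul_le_mul_left p hkn)
  rw [← Nat.mul_sub, Nat.factorization_factorial_mul hp, Nat.factorization_factorial_mul hp,
    Nat.factorization_factorial_mul hp] at h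
  have := hfac hkn
  omega

theorem Nat.mul_div_div_cancel_left {l : ℕ} (m q : ℕ) (hl : 0 < l) : l * m / q / l = m / q := by
  rw [Nat.div_div_eq_div_mul, Nat.mul_comm q, Nat.mul_div_mul_left _ _ hl]

theorem Nat.dvd_add_iff_mod_add_eq {q a c : ℕ} (hc : 0 < c) (hcq : c < q) :
    q ∣ a + c ↔ a % q + c = q := by
  have hsplit : a + c = q * (a / q) + (a % q + c) := by rw [← Nat.add_assoc, Nat.div_add_mod]
  have hlt : a % q + c < 2 * q := by have := Nat.mod_lt a (by omega : 0 < q); omega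
  rw [hsplit, Nat.dvd_add_right (Nat.dvd_mul_right _ _)]
  exact ⟨fun h => Nat.eq_of_dvd_of_lt_two_mul (by omega) h hlt, fun h => by rw [h]⟩

/-- The contribution of the level `q = p ^ i` to the `p`-adic valuation of
`(10n + 1)(10n + 7) C(3n, n)`. -/
def denomCount (n q : ℕ) : ℕ :=
  (if q ≤ n % q + 2 * n % q then 1 else 0) + (if q ∣ 10 * n + 1 then 1 else 0) +
    (if q ∣ 10 * n + 7 then 1 else 0)

/-- The contribution of the level `q = p ^ i` to the `p`-adic valuation of
`88179 · C(15n, 5n) · C(5n - 1, n - 1)`. -/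
def numerCount (n q : ℕ) : ℕ :=
  (if q ∣ 88179 then 1 else 0) + (if q ≤ 5 * n % q + 10 * n % q then 1 else 0) +
    (if q ≤ (n - 1) % q + 4 * n % q then 1 else 0)

theorem factorization_denominator {p b : ℕ} (n : ℕ) (hp : p.Prime) (hb : 10 * n + 7 < p ^ b) :
    ((10 * n + 1) * (10 * n + 7) * (3 * n).choose n).factorization p =
      ∑ i ∈ Ico 1 b, denomCount n (p ^ i) := by
  have hC : (3 * n).choose n ≠ 0 := (Nat.choose_pos (by omega)).ne'
  rw [Nat.factorization_mul (by positivity) hC, Nat.factorization_mul (by omega) (by omega)]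
  simp only [Finsupp.coe_add, Pi.add_apply]
  rw [Nat.factorization_eq_sum_ite_dvd (b := b) hp (by omega) (by omega),
    Nat.factorization_eq_sum_ite_dvd (b := b) hp (by omega) hb, show 3 * n = 2 * n + n by ring,
    Nat.factorization_choose_eq_sum_ite (b := b) hp (by omega)]
  simp only [denomCount, sum_add_distrib]
  omega

theorem factorization_numerator {p b : ℕ} (n : ℕ) (hp : p.Prime)
    (hb : 15 * n + 88179 < p ^ b) :
    (88179 * ((15 * n).choose (5 * n) * (5 * n - 1).choose (n - 1))).factorization p =
      ∑ i ∈ Ico 1 b, numerCount n (p ^ i) := by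
  have hC₁ : (15 * n).choose (5 * n) ≠ 0 := (Nat.choose_pos (by omega)).ne'
  have hC₂ : (5 * n - 1).choose (n - 1) ≠ 0 := (Nat.choose_pos (by omega)).ne'
  rw [Nat.factorization_mul (by norm_num) (mul_ne_zero hC₁ hC₂), Nat.factorization_mul hC₁ hC₂]
  simp only [Finsupp.coe_add, Pi.add_apply]
  rw [Nat.factorization_eq_sum_ite_dvd (b := b) hp (by norm_num) (by omega),
    show 15 * n = 10 * n + 5 * n by ring,
    Nat.factorization_choose_eq_sum_ite (b := b) hp (by omega),
    show 5 * n - 1 = 4 * n + (n - 1) by omega,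
    Nat.factorization_choose_eq_sum_ite (b := b) hp (by omega)]
  simp only [numerCount, sum_add_distrib, add_assoc]

theorem factorization_five_denominator_le (n : ℕ) :
    ((10 * n + 1) * (10 * n + 7) * (3 * n).choose n).factorization 5 ≤
      (88179 * ((15 * n).choose (5 * n) * (5 * n - 1).choose (n - 1))).factorization 5 := by
  have hC₁ : (15 * n).choose (5 * n) ≠ 0 := (Nat.choose_pos (by omega)).ne'
  have hC₂ : (5 * n - 1).choose (n - 1) ≠ 0 := (Nat.choose_pos (by omega)).ne'
  calc ((10 * n + 1) * (10 * n + 7) * (3 * n).choose n).factorization 5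
      = ((3 * n).choose n).factorization 5 := by
        rw [Nat.factorization_mul (by positivity) (Nat.choose_pos (by omega)).ne',
          Nat.factorization_mul (by omega) (by omega)]
        simp [Nat.factorization_eq_zero_of_not_dvd (show ¬ 5 ∣ 10 * n + 1 by omega),
          Nat.factorization_eq_zero_of_not_dvd (show ¬ 5 ∣ 10 * n + 7 by omega)]
    _ = ((15 * n).choose (5 * n)).factorization 5 := by
        rw [show 15 * n = 5 * (3 * n) by ring,
          Nat.factorization_choose_mul_of_prime Nat.prime_five (by omega)]
    _ ≤ _ := Nat.factorization_le_factorization_of_dvd_right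
        ((Nat.dvd_mul_right _ _).mul_left _) hC₁ (by positivity)

theorem denomCount_modEq {n m q : ℕ} (h : n ≡ m [MOD q]) : denomCount n q = denomCount m q := by
  have h₁ : q ∣ 10 * n + 1 ↔ q ∣ 10 * m + 1 := ((h.mul_left 10).add_right 1).dvd_iff dvd_rfl
  have h₇ : q ∣ 10 * n + 7 ↔ q ∣ 10 * m + 7 := ((h.mul_left 10).add_right 7).dvd_iff dvd_rfl
  have h₂ : 2 * n % q = 2 * m % q := h.mul_left 2
  simp only [denomCount, h₂, h₁, h₇, show n % q = m % q from h]

theorem numerCount_modEq {n m q : ℕ} (hn : 0 < n) (hm : 0 < m) (h : n ≡ m [MOD q]) :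
    numerCount n q = numerCount m q := by
  have h₁ : n - 1 ≡ m - 1 [MOD q] :=
    Nat.ModEq.add_right_cancel' 1 (by rwa [Nat.sub_add_cancel hn, Nat.sub_add_cancel hm])
  have h₄ : 4 * n % q = 4 * m % q := h.mul_left 4
  have h₅ : 5 * n % q = 5 * m % q := h.mul_left 5
  have h₁₀ : 10 * n % q = 10 * m % q := h.mul_left 10
  simp only [numerCount, h₄, h₅, h₁₀, show (n - 1) % q = (m - 1) % q from h₁]

set_option maxHeartbeats 1000000 in
theorem denomCount_le_numerCount_of_nineteen_lt {q r : ℕ} (hq : 19 < q) (hq5 : ¬ 5 ∣ q)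
    (hr : 0 < r) (hrq : r ≤ q) : denomCount r q ≤ numerCount r q := by
  have hq0 : 0 < q := by omega
  have h5r : 5 * r % q = 0 → r = q := fun h =>
    Nat.le_antisymm hrq <| Nat.le_of_dvd hr <|
      (Nat.Coprime.symm ((Nat.prime_five.coprime_iff_not_dvd).2 hq5)).dvd_of_dvd_mul_left
        (Nat.dvd_of_mod_eq_zero h)
  -- every quotient `k * r / q` with `k ∣ 20` is determined by the twentieth `20 * r / q`
  have hmod : ∀ l k, l * k = 20 → k * r % q + q * (20 * r / q / l) = k * r := by
    intro l k hlk
    rw [← hlk, Nat.mul_assoc, Nat.mul_div_div_cancel_left _ _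
      (Nat.pos_of_mul_pos_right (hlk ▸ by norm_num : 0 < l * k))]
    exact Nat.mod_add_div _ _
  have e₁ := hmod 20 1 rfl
  have e₂ := hmod 10 2 rfl
  have e₄ := hmod 5 4 rfl
  have e₅ := hmod 4 5 rfl
  have e₁₀ := hmod 2 10 rfl
  have hlo : q * (20 * r / q) ≤ 20 * r := Nat.mul_div_le _ _
  have hhi : 20 * r < q * (20 * r / q + 1) := Nat.lt_mul_div_succ _ hq0
  have hj : 20 * r / q ≤ 20 := Nat.div_le_of_le_mul (by omega : 20 * r ≤ q * 20)
  have hd1 : q ∣ 10 * r + 1 ↔ 10 * r % q + 1 = q :=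
    Nat.dvd_add_iff_mod_add_eq (by omega) (by omega)
  have hd7 : q ∣ 10 * r + 7 ↔ 10 * r % q + 7 = q :=
    Nat.dvd_add_iff_mod_add_eq (by omega) (by omega)
  suffices denomCount r q ≤ (if q ≤ 5 * r % q + 10 * r % q then 1 else 0) +
      (if q ≤ (r - 1) % q + 4 * r % q then 1 else 0) by unfold numerCount; omega
  unfold denomCount
  rw [Nat.mod_eq_of_lt (show r - 1 < q by omega)]
  simp only [hd1, hd7]
  rw [one_mul] at e₁
  clear hmod hd1 hd7
  generalize 20 * r / q = j at *
  interval_cases j <;> simp only [Nat.reduceDiv] at e₁ e₂ e₄ e₅ e₁₀ <;> split_ifs <;> omega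

theorem denomCount_le_numerCount_of_le_nineteen :
    ∀ q ≤ 19, 1 < q → ¬ 5 ∣ q → ∀ r ≤ q, 0 < r → denomCount r q ≤ numerCount r q := by
  decide

theorem denomCount_le_numerCount {n q : ℕ} (hn : 0 < n) (hq : 1 < q) (hq5 : ¬ 5 ∣ q) :
    denomCount n q ≤ numerCount n q := by
  -- a representative in `[1, q]`, on which `r - 1` does not truncate
  set r := (n - 1) % q + 1
  have hnr : n ≡ r [MOD q] := by
    simpa only [Nat.sub_add_cancel hn] using ((Nat.mod_modEq (n - 1) q).symm.add_right 1)
  have hrq : r ≤ q := Nat.mod_lt _ (by omega)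
  rw [denomCount_modEq hnr, numerCount_modEq hn (Nat.succ_pos _) hnr]
  rcases lt_or_ge 19 q with hq19 | hq19
  · exact denomCount_le_numerCount_of_nineteen_lt hq19 hq5 (Nat.succ_pos _) hrq
  · exact denomCount_le_numerCount_of_le_nineteen q hq19 hq hq5 r hrq (Nat.succ_pos _)

theorem t_n_mod_10n_add_7 (n : ℕ) (hn : 0 < n) :
    (10 * n + 1) * (10 * n + 7) * Nat.choose (3 * n) n ∣
      88179 * (Nat.choose (15 * n) (5 * n) * Nat.choose (5 * n - 1) (n - 1)) := by
  have hC₀ : (3 * n).choose n ≠ 0 := (Nat.choose_pos (by omega)).ne'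
  have hC₁ : (15 * n).choose (5 * n) ≠ 0 := (Nat.choose_pos (by omega)).ne'
  have hC₂ : (5 * n - 1).choose (n - 1) ≠ 0 := (Nat.choose_pos (by omega)).ne'
  rw [← Nat.factorization_le_iff_dvd (by positivity) (by positivity)]
  intro p
  by_cases hp : p.Prime
  · rcases eq_or_ne p 5 with rfl | hp5
    · exact factorization_five_denominator_le n
    set b := 15 * n + 88179
    have hb : b < p ^ b := Nat.lt_pow_self hp.one_lt
    rw [factorization_denominator (b := b) n hp (by omega), factorization_numerator n hp hb]
    refine sum_le_sum fun i hi => denomCount_le_numerCount hn ?_ ?_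
    · exact Nat.one_lt_pow (Nat.one_le_iff_ne_zero.1 (mem_Ico.1 hi).1) hp.one_lt
    · exact fun h => hp5 ((Nat.prime_dvd_prime_iff_eq Nat.prime_five hp).1
        (Nat.prime_five.dvd_of_dvd_pow h)).symm
  · simp [Nat.factorization_eq_zero_of_not_prime _ hp]
end

section
/- Let m and n be positive integers such that m divides 10n+3 and m ≥ 9. Then ⌊15n/m⌋ + ⌊2n/m⌋ = ⌊10n/m⌋ + ⌊4n/m⌋ + ⌊3n/m⌋ + 1. -/
/-!
Every floor ⌊c n / m⌋ splits as c ⌊n / m⌋ + ⌊c t / m⌋ with t = n mod m, so the identity only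
depends on t, which again satisfies m ∣ 10 t + 3. As t < m and 10 t + 3 is odd and prime to 5,
10 t + 3 = k m with k ∈ {1, 3, 7, 9}; since m ≥ 9, the point t / m = k / 10 - 3 / (10 m) lies in
[k / 10 - 1 / 30, k / 10), an interval on which none of the five floors jumps.
-/

namespace Nat

theorem mul_div_eq_mul_div_add_mul_mod_div (c n m : ℕ) :
    c * n / m = c * (n / m) + c * (n % m) / m := by
  rcases m.eq_zero_or_pos with rfl | hm
  · simp
  conv_lhs => rw [← div_add_mod n m, mul_add, mul_left_comm, mul_add_div hm, add_comm]
  omega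

theorem dvd_mul_mod_add_iff (a b n m : ℕ) : m ∣ a * (n % m) + b ↔ m ∣ a * n + b := by
  simp only [dvd_iff_mod_eq_zero, add_mod, mul_mod, mod_mod]

theorem ten_mul_add_three_eq_mul_cases {t m : ℕ} (ht : t < m) (h : m ∣ 10 * t + 3) :
    10 * t + 3 = m ∨ 10 * t + 3 = 3 * m ∨ 10 * t + 3 = 7 * m ∨ 10 * t + 3 = 9 * m := by
  obtain ⟨k, hk⟩ := h
  have hk10 : k < 10 := by
    by_contra! hk10
    nlinarith
  interval_cases k <;> omega

theorem floor_identity_of_dvd_ten_mul_add_three {t m : ℕ} (hm : 9 ≤ m) (ht : t < m)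
    (h : m ∣ 10 * t + 3) :
    15 * t / m + 2 * t / m = 10 * t / m + 4 * t / m + 3 * t / m + 1 := by
  rcases ten_mul_add_three_eq_mul_cases ht h with h | h | h | h
  · have : 15 * t / m = 1 ∧ 2 * t / m = 0 ∧ 10 * t / m = 0 ∧ 4 * t / m = 0 ∧ 3 * t / m = 0 := by
      refine ⟨?_, ?_, ?_, ?_, ?_⟩ <;> exact Nat.div_eq_of_lt_le (by omega) (by omega)
    omega
  · have : 15 * t / m = 4 ∧ 2 * t / m = 0 ∧ 10 * t / m = 2 ∧ 4 * t / m = 1 ∧ 3 * t / m = 0 := by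
      refine ⟨?_, ?_, ?_, ?_, ?_⟩ <;> exact Nat.div_eq_of_lt_le (by omega) (by omega)
    omega
  · have : 15 * t / m = 10 ∧ 2 * t / m = 1 ∧ 10 * t / m = 6 ∧ 4 * t / m = 2 ∧ 3 * t / m = 2 := by
      refine ⟨?_, ?_, ?_, ?_, ?_⟩ <;> exact Nat.div_eq_of_lt_le (by omega) (by omega)
    omega
  · have : 15 * t / m = 13 ∧ 2 * t / m = 1 ∧ 10 * t / m = 8 ∧ 4 * t / m = 3 ∧ 3 * t / m = 2 := by
      refine ⟨?_, ?_, ?_, ?_, ?_⟩ <;> exact Nat.div_eq_of_lt_le (by omega) (by omega)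
    omega

end Nat

theorem floor_eq_of_dvd_ten_n_add_three_general (m n : ℕ)
    (hdvd : m ∣ 10 * n + 3) (hm9 : 9 ≤ m) :
    15 * n / m + 2 * n / m = 10 * n / m + 4 * n / m + 3 * n / m + 1 := by
  have hred := Nat.floor_identity_of_dvd_ten_mul_add_three hm9 (Nat.mod_lt n (by omega))
    ((Nat.dvd_mul_mod_add_iff 10 3 n m).2 hdvd)
  simp only [Nat.mul_div_eq_mul_div_add_mul_mod_div _ n m]
  omega

theorem floor_eq_of_dvd_ten_n_add_three (m n : ℕ) (hm : 0 < m) (hn : 0 < n)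
    (hdvd : m ∣ 10 * n + 3) (hm9 : 9 ≤ m) :
    15 * n / m + 2 * n / m = 10 * n / m + 4 * n / m + 3 * n / m + 1 :=
  floor_eq_of_dvd_ten_n_add_three_general m n hdvd hm9
end
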